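/- There is a constant c > 0, depending only on C₀ and C₁, such that for all reals s < t and every absolutely continuous curve γ : [s,t] → ℝ^d one has A^W_{s,t}(γ) ≥ −c · Σ_{l=⌊s⌋}^{⌈t⌉−1} ( 1 + max_{l ≤ τ ≤ l+1} |W(τ) − W(l+1)|² ), where ⌊s⌋ is the greatest integer ≤ s and ⌈t⌉ the least integer ≥ t. -/

import Mathlib

open MeasureTheory Set Real RealInnerProductSpace

/-- `γ : [s,t] → ℝ^d` is absolutely continuous with (integrable) derivative `γ'`:
`γ τ = γ s + ∫_s^τ γ' u du` for all `τ ∈ [s,t]`. -/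
def IsACWith {d : ℕ} (γ γ' : ℝ → EuclideanSpace ℝ (Fin d)) (s t : ℝ) : Prop :=
  IntervalIntegrable γ' volume s t ∧
    ∀ τ ∈ Set.Icc s t, γ τ = γ s + ∫ u in s..τ, γ' u

/-- The action `A^{W}_{s,t}(γ) = ∫_s^t ((1/2)|γ̇|² + ∇F(γ)·γ̇ (W(τ) - W(t))) dτ
+ F(γ(s)) (W(s) - W(t))`, expressed via the pair `(γ, γ')`. -/
noncomputable def actionW {d : ℕ} (F : EuclideanSpace ℝ (Fin d) → ℝ) (W : ℝ → ℝ)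
    (γ γ' : ℝ → EuclideanSpace ℝ (Fin d)) (s t : ℝ) : ℝ :=
  (∫ τ in s..t, ((1/2) * ‖γ' τ‖^2 + ⟪gradient F (γ τ), γ' τ⟫ * (W τ - W t)))
    + F (γ s) * (W s - W t)

/-- `max_{s ≤ τ ≤ t} |W(τ) - W(t)|`. -/
noncomputable def maxW (W : ℝ → ℝ) (s t : ℝ) : ℝ :=
  sSup ((fun τ => |W τ - W t|) '' Set.Icc s t)

/-- `Σ_{l=⌊s⌋}^{⌈t⌉-1} (1 + max_{l ≤ τ ≤ l+1} |W(τ) - W(l+1)|²)`. -/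
noncomputable def sumW (W : ℝ → ℝ) (s t : ℝ) : ℝ :=
  ∑ l ∈ Finset.Icc ⌊s⌋ (⌈t⌉ - 1), (1 + (maxW W (l : ℝ) ((l : ℝ) + 1))^2)

/-!
Completing the square gives `½|v|² + (∇F·v) w ≥ -C₁²m²/2` whenever `|w| ≤ m`. On a piece
`[a, b] ⊆ [l, l + 1]` one has `|W(τ) - W(b)| ≤ 2 max_{[l, l+1]} |W - W(l+1)|`, so with `|F| ≤ C₀`
for the boundary term the action over the piece is at least
`-c (1 + max_{[l, l+1]} |W - W(l+1)|²)`. The action is additive along the subdivision of `[s, t]`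
at the integers: `F` is Lipschitz, so `F ∘ γ` is absolutely continuous and
`∫_a^b ∇F(γ)·γ̇ = F(γ(b)) - F(γ(a))`, hence `A_{a,b} = Φ(b) - Φ(a)` with
`Φ(x) = ∫_s^x (½|γ̇|² + (∇F(γ)·γ̇) W) - W(x) F(γ(x))`.
-/

open Filter Topology

namespace AbsolutelyContinuousOnInterval

variable {X Y : Type*} [PseudoMetricSpace X] [PseudoMetricSpace Y]

theorem of_dist_le_mul {f : ℝ → X} {g : ℝ → Y} {a b K : ℝ}
    (hg : AbsolutelyContinuousOnInterval g a b)
    (hfg : ∀ x ∈ uIcc a b, ∀ y ∈ uIcc a b, dist (f x) (f y) ≤ K * dist (g x) (g y)) :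
    AbsolutelyContinuousOnInterval f a b := by
  have hK : Tendsto (fun E : ℕ × (ℕ → ℝ × ℝ) ↦
      K * ∑ i ∈ Finset.range E.1, dist (g (E.2 i).1) (g (E.2 i).2))
      (totalLengthFilter ⊓ 𝓟 (disjWithin a b)) (𝓝 0) := by
    simpa using Tendsto.const_mul K hg
  refine squeeze_zero' (Eventually.of_forall fun _ ↦ Finset.sum_nonneg fun _ _ ↦ dist_nonneg)
    ?_ hK
  filter_upwards [eventually_inf_principal.mpr (Eventually.of_forall fun _ h ↦ h)]
    with ⟨n, I⟩ hnI
  rw [Finset.mul_sum]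
  exact Finset.sum_le_sum fun i hi ↦ hfg _ (hnI.1 i hi).1 _ (hnI.1 i hi).2

end AbsolutelyContinuousOnInterval

theorem LipschitzWith.comp_absolutelyContinuousOnInterval {X Y : Type*} [PseudoMetricSpace X]
    [PseudoMetricSpace Y] {F : X → Y} {K : NNReal} {γ : ℝ → X} {a b : ℝ}
    (hF : LipschitzWith K F) (hγ : AbsolutelyContinuousOnInterval γ a b) :
    AbsolutelyContinuousOnInterval (F ∘ γ) a b :=
  hγ.of_dist_le_mul fun _ _ _ _ ↦ hF.dist_le_mul _ _

section Curve

variable {E : Type*} [NormedAddCommGroup E] [NormedSpace ℝ E] {γ γ' : ℝ → E} {a b : ℝ}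

theorem absolutelyContinuousOnInterval_of_eq_add_integral (hab : a ≤ b)
    (hγ' : IntervalIntegrable γ' volume a b)
    (hγ : ∀ τ ∈ Icc a b, γ τ = γ a + ∫ u in a..τ, γ' u) :
    AbsolutelyContinuousOnInterval γ a b := by
  refine (hγ'.norm.absolutelyContinuousOnInterval_intervalIntegral left_mem_uIcc).of_dist_le_mul
    (K := 1) fun x hx y hy ↦ ?_
  rw [uIcc_of_le hab] at hx hy
  have hint : ∀ z ∈ Icc a b, IntervalIntegrable γ' volume a z := fun z hz ↦
    hγ'.mono_set (by rw [uIcc_of_le hab, uIcc_of_le hz.1]; exact Icc_subset_Icc_right hz.2)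
  rw [one_mul, dist_eq_norm, dist_eq_norm, hγ x hx, hγ y hy, add_sub_add_left_eq_sub,
    intervalIntegral.integral_interval_sub_left (hint x hx) (hint y hy),
    intervalIntegral.integral_interval_sub_left (hint x hx).norm (hint y hy).norm]
  exact intervalIntegral.norm_integral_le_abs_integral_norm

theorem ae_hasDerivAt_of_eq_add_integral [CompleteSpace E]
    (hγ' : IntervalIntegrable γ' volume a b)
    (hγ : ∀ τ ∈ Icc a b, γ τ = γ a + ∫ u in a..τ, γ' u) :
    ∀ᵐ x, x ∈ Ioo a b → HasDerivAt γ (γ' x) x := by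
  filter_upwards [hγ'.ae_hasDerivAt_integral] with x hx hxab
  have hx' : x ∈ uIcc a b := Ioo_subset_Icc_self.trans Icc_subset_uIcc hxab
  refine ((hx hx' a left_mem_uIcc).const_add (γ a)).congr_of_eventuallyEq ?_
  filter_upwards [Ioo_mem_nhds hxab.1 hxab.2] with y hy using hγ y (Ioo_subset_Icc_self hy)

end Curve

section ChainRule

variable {E : Type*} [NormedAddCommGroup E] [NormedSpace ℝ E] [CompleteSpace E]
  {F : E → ℝ} {K : NNReal} {γ γ' : ℝ → E} {a b : ℝ}

theorem ae_deriv_comp_eq_fderiv_apply (hF : Differentiable ℝ F) (hab : a ≤ b)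
    (hγ' : IntervalIntegrable γ' volume a b)
    (hγ : ∀ τ ∈ Icc a b, γ τ = γ a + ∫ u in a..τ, γ' u) :
    ∀ᵐ u, u ∈ uIoc a b → deriv (F ∘ γ) u = fderiv ℝ F (γ u) (γ' u) := by
  have hb : ∀ᵐ u : ℝ, u ≠ b := by simp [ae_iff, measure_singleton]
  filter_upwards [ae_hasDerivAt_of_eq_add_integral hγ' hγ, hb] with u hu hub hmem
  rw [uIoc_of_le hab] at hmem
  exact ((hF (γ u)).hasFDerivAt.comp_hasDerivAt u (hu ⟨hmem.1, hmem.2.lt_of_ne hub⟩)).deriv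

theorem intervalIntegrable_fderiv_comp_apply (hFd : Differentiable ℝ F)
    (hFl : LipschitzWith K F) (hab : a ≤ b) (hγ' : IntervalIntegrable γ' volume a b)
    (hγ : ∀ τ ∈ Icc a b, γ τ = γ a + ∫ u in a..τ, γ' u) :
    IntervalIntegrable (fun u ↦ fderiv ℝ F (γ u) (γ' u)) volume a b :=
  (hFl.comp_absolutelyContinuousOnInterval
      (absolutelyContinuousOnInterval_of_eq_add_integral hab hγ' hγ)).intervalIntegrable_deriv
    |>.congr_ae
      ((ae_restrict_iff' measurableSet_uIoc).2 (ae_deriv_comp_eq_fderiv_apply hFd hab hγ' hγ))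

theorem integral_fderiv_comp_apply_eq_sub (hFd : Differentiable ℝ F)
    (hFl : LipschitzWith K F) (hab : a ≤ b) (hγ' : IntervalIntegrable γ' volume a b)
    (hγ : ∀ τ ∈ Icc a b, γ τ = γ a + ∫ u in a..τ, γ' u) :
    ∫ u in a..b, fderiv ℝ F (γ u) (γ' u) = F (γ b) - F (γ a) := by
  rw [← intervalIntegral.integral_congr_ae (ae_deriv_comp_eq_fderiv_apply hFd hab hγ' hγ)]
  exact (hFl.comp_absolutelyContinuousOnInterval
    (absolutelyContinuousOnInterval_of_eq_add_integral hab hγ' hγ)).integral_deriv_eq_sub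

end ChainRule

theorem Int.sum_Ico_sub {M : Type*} [AddCommGroup M] (f : ℤ → M) {m n : ℤ} (hmn : m ≤ n) :
    ∑ l ∈ Finset.Ico m n, (f (l + 1) - f l) = f n - f m := by
  induction n, hmn using Int.leInduction with
  | base => simp
  | succ n hmn ih =>
    rw [← Finset.insert_Ico_right_eq_Ico_add_one hmn, Finset.sum_insert Finset.right_notMem_Ico,
      ih]
    abel

-- `c ≤ 0` is what makes the bound survive the junk value `0` of a non-integrable integral.
theorem le_intervalIntegral_of_forall_le {f : ℝ → ℝ} {a b c : ℝ} (hab : a ≤ b) (hc : c ≤ 0)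
    (hf : ∀ u ∈ Icc a b, c ≤ f u) : c * (b - a) ≤ ∫ u in a..b, f u := by
  by_cases hfi : IntervalIntegrable f volume a b
  · simpa [mul_comm] using intervalIntegral.integral_mono_on hab intervalIntegrable_const hfi hf
  · rw [intervalIntegral.integral_undef hfi]
    exact mul_nonpos_of_nonpos_of_nonneg hc (sub_nonneg.2 hab)

theorem neg_le_half_norm_sq_add_inner_mul {E : Type*} [NormedAddCommGroup E]
    [InnerProductSpace ℝ E] {G v : E} {w C m : ℝ} (hG : ‖G‖ ≤ C) (hw : |w| ≤ m) :
    -(C ^ 2 * m ^ 2 / 2) ≤ (1 / 2) * ‖v‖ ^ 2 + ⟪G, v⟫ * w := by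
  have h : |⟪G, v⟫ * w| ≤ C * ‖v‖ * m := by
    rw [abs_mul]
    exact mul_le_mul ((abs_real_inner_le_norm G v).trans (by gcongr)) hw (abs_nonneg w)
      (mul_nonneg ((norm_nonneg G).trans hG) (norm_nonneg v))
  nlinarith [neg_abs_le (⟪G, v⟫ * w), sq_nonneg (‖v‖ - C * m)]

theorem lipschitzWith_of_norm_gradient_le {E : Type*} [NormedAddCommGroup E]
    [InnerProductSpace ℝ E] [CompleteSpace E] {F : E → ℝ} {C : ℝ} (hF : Differentiable ℝ F)
    (hC : ∀ x, ‖gradient F x‖ ≤ C) : LipschitzWith C.toNNReal F :=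
  lipschitzWith_of_nnnorm_fderiv_le hF fun x ↦ by
    rw [← NNReal.coe_le_coe, coe_nnnorm, ← (InnerProductSpace.toDual ℝ E).symm.norm_map]
    exact (hC x).trans (Real.le_coe_toNNReal C)

theorem le_maxW {W : ℝ → ℝ} (hW : Continuous W) {a b τ : ℝ} (hτ : τ ∈ Icc a b) :
    |W τ - W b| ≤ maxW W a b :=
  le_csSup (isCompact_Icc.image (by fun_prop)).bddAbove (mem_image_of_mem _ hτ)

theorem abs_sub_le_two_mul_maxW {W : ℝ → ℝ} (hW : Continuous W) {a b τ σ : ℝ}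
    (hτ : τ ∈ Icc a b) (hσ : σ ∈ Icc a b) : |W τ - W σ| ≤ 2 * maxW W a b := by
  linarith [abs_sub_le (W τ) (W b) (W σ), abs_sub_comm (W b) (W σ), le_maxW hW hτ,
    le_maxW hW hσ]

section Action

variable {d : ℕ} {F : EuclideanSpace ℝ (Fin d) → ℝ} {W : ℝ → ℝ}
  {γ γ' : ℝ → EuclideanSpace ℝ (Fin d)} {s t C₀ C₁ : ℝ}

theorem neg_le_actionW {a b m : ℝ} (hab : a ≤ b) (hF₀ : ∀ x, |F x| ≤ C₀)
    (hF₁ : ∀ x, ‖gradient F x‖ ≤ C₁) (hW : ∀ τ ∈ Icc a b, |W τ - W b| ≤ m) :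
    -(C₁ ^ 2 * m ^ 2 / 2 * (b - a) + C₀ * m) ≤ actionW F W γ γ' a b := by
  have hkin := le_intervalIntegral_of_forall_le hab (neg_nonpos.2 (by positivity))
    fun τ hτ ↦ neg_le_half_norm_sq_add_inner_mul (v := γ' τ) (hF₁ (γ τ)) (hW τ hτ)
  have hbdry : |F (γ a) * (W a - W b)| ≤ C₀ * m := by
    rw [abs_mul]
    exact mul_le_mul (hF₀ _) (hW a (left_mem_Icc.2 hab)) (abs_nonneg _)
      ((abs_nonneg _).trans (hF₀ 0))
  rw [actionW]
  linarith [neg_abs_le (F (γ a) * (W a - W b))]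

theorem IsACWith.mono_right {x : ℝ} (hγ : IsACWith γ γ' s t) (hx : x ∈ Icc s t) :
    IsACWith γ γ' s x :=
  ⟨hγ.1.mono_set (uIcc_subset_uIcc left_mem_uIcc (Icc_subset_uIcc hx)),
    fun τ hτ ↦ hγ.2 τ ⟨hτ.1, hτ.2.trans hx.2⟩⟩

theorem IsACWith.intervalIntegrable_inner_gradient (hF : Differentiable ℝ F)
    (hF₁ : ∀ x, ‖gradient F x‖ ≤ C₁) (hst : s ≤ t) (hγ : IsACWith γ γ' s t) :
    IntervalIntegrable (fun τ ↦ ⟪gradient F (γ τ), γ' τ⟫) volume s t := by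
  simpa only [inner_gradient_left] using
    intervalIntegrable_fderiv_comp_apply hF (lipschitzWith_of_norm_gradient_le hF hF₁) hst hγ.1
      hγ.2

theorem IsACWith.integral_inner_gradient (hF : Differentiable ℝ F)
    (hF₁ : ∀ x, ‖gradient F x‖ ≤ C₁) (hst : s ≤ t) (hγ : IsACWith γ γ' s t) :
    ∫ τ in s..t, ⟪gradient F (γ τ), γ' τ⟫ = F (γ t) - F (γ s) := by
  simpa only [inner_gradient_left] using
    integral_fderiv_comp_apply_eq_sub hF (lipschitzWith_of_norm_gradient_le hF hF₁) hst hγ.1 hγ.2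

noncomputable def actionPotential (F : EuclideanSpace ℝ (Fin d) → ℝ) (W : ℝ → ℝ)
    (γ γ' : ℝ → EuclideanSpace ℝ (Fin d)) (s x : ℝ) : ℝ :=
  (∫ τ in s..x, ((1 / 2) * ‖γ' τ‖ ^ 2 + ⟪gradient F (γ τ), γ' τ⟫ * W τ)) - W x * F (γ x)

theorem actionW_eq_actionPotential_sub (hF : Differentiable ℝ F)
    (hF₁ : ∀ x, ‖gradient F x‖ ≤ C₁) (hW : Continuous W) (hγ : IsACWith γ γ' s t)
    (hK : IntervalIntegrable (fun τ ↦ ‖γ' τ‖ ^ 2) volume s t) {a b : ℝ} (ha : s ≤ a)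
    (hab : a ≤ b) (hb : b ≤ t) :
    actionW F W γ γ' a b = actionPotential F W γ γ' s b - actionPotential F W γ γ' s a := by
  set g := fun τ ↦ ⟪gradient F (γ τ), γ' τ⟫
  have hg : IntervalIntegrable g volume s t :=
    hγ.intervalIntegrable_inner_gradient hF hF₁ (ha.trans (hab.trans hb))
  have hL : IntervalIntegrable (fun τ ↦ (1 / 2) * ‖γ' τ‖ ^ 2 + g τ * W τ) volume s t :=
    (hK.const_mul _).add (hg.mul_continuousOn hW.continuousOn)
  have hsub : ∀ x ∈ Icc s t, uIcc s x ⊆ uIcc s t := fun x hx ↦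
    uIcc_subset_uIcc left_mem_uIcc (Icc_subset_uIcc hx)
  have hsa : a ∈ Icc s t := ⟨ha, hab.trans hb⟩
  have hsb : b ∈ Icc s t := ⟨ha.trans hab, hb⟩
  have hLab := intervalIntegral.integral_interval_sub_left (hL.mono_set (hsub b hsb))
    (hL.mono_set (hsub a hsa))
  have hgab := intervalIntegral.integral_interval_sub_left (hg.mono_set (hsub b hsb))
    (hg.mono_set (hsub a hsa))
  rw [(hγ.mono_right hsb).integral_inner_gradient hF hF₁ hsb.1,
    (hγ.mono_right hsa).integral_inner_gradient hF hF₁ hsa.1] at hgab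
  have hLg : ∫ τ in a..b, ((1 / 2) * ‖γ' τ‖ ^ 2 + g τ * (W τ - W b)) =
      (∫ τ in a..b, ((1 / 2) * ‖γ' τ‖ ^ 2 + g τ * W τ)) - W b * ∫ τ in a..b, g τ := by
    rw [← intervalIntegral.integral_const_mul, ← intervalIntegral.integral_sub]
    · congr 1; ext τ; ring
    · exact (hL.mono_set (hsub a hsa)).symm.trans (hL.mono_set (hsub b hsb))
    · exact ((hg.mono_set (hsub a hsa)).symm.trans (hg.mono_set (hsub b hsb))).const_mul _
  rw [actionW, actionPotential, actionPotential, hLg, ← hLab, ← hgab]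
  ring

theorem actionW_eq_sum_actionW (hF : Differentiable ℝ F) (hF₁ : ∀ x, ‖gradient F x‖ ≤ C₁)
    (hW : Continuous W) (hst : s ≤ t) (hγ : IsACWith γ γ' s t)
    (hK : IntervalIntegrable (fun τ ↦ ‖γ' τ‖ ^ 2) volume s t) :
    actionW F W γ γ' s t = ∑ l ∈ Finset.Ico ⌊s⌋ ⌈t⌉,
      actionW F W γ γ' (max s (min t l)) (max s (min t ((l + 1 : ℤ) : ℝ))) := by
  set q : ℤ → ℝ := fun l ↦ max s (min t l)
  set Φ := actionPotential F W γ γ' s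
  have hq (l : ℤ) : q l ∈ Icc s t := ⟨le_max_left _ _, max_le hst (min_le_left _ _)⟩
  have hq_mono : Monotone q := fun l m hlm ↦
    max_le_max le_rfl (min_le_min le_rfl (Int.cast_le.2 hlm))
  have hq_floor : q ⌊s⌋ = s := by
    simp only [q, min_eq_right ((Int.floor_le s).trans hst), max_eq_left (Int.floor_le s)]
  have hq_ceil : q ⌈t⌉ = t := by simp only [q, min_eq_left (Int.le_ceil t), max_eq_right hst]
  calc actionW F W γ γ' s t = Φ (q ⌈t⌉) - Φ (q ⌊s⌋) := by
        rw [hq_floor, hq_ceil]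
        exact actionW_eq_actionPotential_sub hF hF₁ hW hγ hK le_rfl hst le_rfl
    _ = ∑ l ∈ Finset.Ico ⌊s⌋ ⌈t⌉, (Φ (q (l + 1)) - Φ (q l)) :=
        (Int.sum_Ico_sub (Φ ∘ q) ((Int.floor_le_ceil s).trans (Int.ceil_mono hst))).symm
    _ = _ := Finset.sum_congr rfl fun l _ ↦ (actionW_eq_actionPotential_sub hF hF₁ hW hγ hK
        (hq l).1 (hq_mono (Int.le_add_one le_rfl)) (hq (l + 1)).2).symm

theorem neg_mul_sumW_le_actionW_of_intervalIntegrable (hF : Differentiable ℝ F)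
    (hF₀ : ∀ x, |F x| ≤ C₀) (hF₁ : ∀ x, ‖gradient F x‖ ≤ C₁) (hW : Continuous W)
    (hst : s ≤ t) (hγ : IsACWith γ γ' s t)
    (hK : IntervalIntegrable (fun τ ↦ ‖γ' τ‖ ^ 2) volume s t) :
    -((2 * C₁ ^ 2 + C₀) * sumW W s t) ≤ actionW F W γ γ' s t := by
  have hC₀ : 0 ≤ C₀ := (abs_nonneg _).trans (hF₀ 0)
  rw [actionW_eq_sum_actionW hF hF₁ hW hst hγ hK, sumW, Finset.Icc_sub_one_right_eq_Ico,
    Finset.mul_sum, ← Finset.sum_neg_distrib]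
  refine Finset.sum_le_sum fun l hl ↦ ?_
  obtain ⟨hsl, hlt⟩ := Finset.mem_Ico.1 hl
  rw [Int.floor_le_iff] at hsl
  rw [Int.lt_ceil] at hlt
  push_cast at hsl ⊢
  set a := max s (min t l)
  set b := max s (min t (l + 1))
  set M := maxW W l (l + 1)
  have hla : (l : ℝ) ≤ a := le_max_of_le_right (le_min hlt.le le_rfl)
  have hab : a ≤ b := max_le_max le_rfl (min_le_min le_rfl (by linarith))
  have hbl : b ≤ l + 1 := max_le hsl.le (min_le_right _ _)
  have hosc : ∀ τ ∈ Icc a b, |W τ - W b| ≤ 2 * M := fun τ hτ ↦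
    abs_sub_le_two_mul_maxW hW ⟨hla.trans hτ.1, hτ.2.trans hbl⟩ ⟨hla.trans hab, hbl⟩
  calc -((2 * C₁ ^ 2 + C₀) * (1 + M ^ 2))
      ≤ -(C₁ ^ 2 * (2 * M) ^ 2 / 2 * (b - a) + C₀ * (2 * M)) := by
        nlinarith [mul_nonneg hC₀ (sq_nonneg (M - 1)),
          mul_le_mul_of_nonneg_left (show b - a ≤ 1 by linarith) (sq_nonneg (C₁ * M)),
          sq_nonneg C₁]
    _ ≤ actionW F W γ γ' a b := neg_le_actionW hab hF₀ hF₁ hosc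

/-- When `‖γ'‖²` is not integrable the integral in `actionW` takes the junk value `0`, which is
also the integral for the constant curve at `γ s`; the boundary terms agree. -/
theorem actionW_eq_actionW_const_of_not_intervalIntegrable (hF : Differentiable ℝ F)
    (hF₁ : ∀ x, ‖gradient F x‖ ≤ C₁) (hW : Continuous W) (hst : s ≤ t)
    (hγ : IsACWith γ γ' s t) (hK : ¬IntervalIntegrable (fun τ ↦ ‖γ' τ‖ ^ 2) volume s t) :
    actionW F W γ γ' s t = actionW F W (fun _ ↦ γ s) 0 s t := by
  have hg : IntervalIntegrable (fun τ ↦ ⟪gradient F (γ τ), γ' τ⟫ * (W τ - W t)) volume s t :=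
    (hγ.intervalIntegrable_inner_gradient hF hF₁ hst).mul_continuousOn (by fun_prop)
  have hL : ¬IntervalIntegrable
      (fun τ ↦ (1 / 2) * ‖γ' τ‖ ^ 2 + ⟪gradient F (γ τ), γ' τ⟫ * (W τ - W t)) volume s t :=
    fun hL ↦ hK (by simpa using (hL.sub hg).const_mul 2)
  rw [actionW, actionW, intervalIntegral.integral_undef hL]
  simp

theorem neg_mul_sumW_le_actionW (hF : Differentiable ℝ F) (hF₀ : ∀ x, |F x| ≤ C₀)
    (hF₁ : ∀ x, ‖gradient F x‖ ≤ C₁) (hW : Continuous W) (hst : s ≤ t)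
    (hγ : IsACWith γ γ' s t) :
    -((2 * C₁ ^ 2 + C₀) * sumW W s t) ≤ actionW F W γ γ' s t := by
  by_cases hK : IntervalIntegrable (fun τ ↦ ‖γ' τ‖ ^ 2) volume s t
  · exact neg_mul_sumW_le_actionW_of_intervalIntegrable hF hF₀ hF₁ hW hst hγ hK
  · rw [actionW_eq_actionW_const_of_not_intervalIntegrable hF hF₁ hW hst hγ hK]
    exact neg_mul_sumW_le_actionW_of_intervalIntegrable hF hF₀ hF₁ hW hst
      ⟨intervalIntegrable_const, by simp⟩ (by simp)

theorem sumW_nonneg (W : ℝ → ℝ) (s t : ℝ) : 0 ≤ sumW W s t :=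
  Finset.sum_nonneg fun _ _ ↦ by positivity

end Action

/-- There is `c > 0` depending only on `C₀, C₁` such that for all `s < t`
and every absolutely continuous curve `γ : [s,t] → ℝ^d`:
`A^W_{s,t}(γ) ≥ -c Σ_{l=⌊s⌋}^{⌈t⌉-1} (1 + max_{l ≤ τ ≤ l+1} |W(τ) - W(l+1)|²)`. -/
theorem action_lower_bound_nonperiodic (C₀ C₁ : ℝ) :
    ∃ c : ℝ, 0 < c ∧
      ∀ (d : ℕ), 1 ≤ d →
      ∀ F : EuclideanSpace ℝ (Fin d) → ℝ, ContDiff ℝ 1 F →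
        (∀ x, |F x| ≤ C₀) → (∀ x, ‖gradient F x‖ ≤ C₁) →
      ∀ W : ℝ → ℝ, Continuous W →
      ∀ s t : ℝ, s < t →
      ∀ γ γ' : ℝ → EuclideanSpace ℝ (Fin d), IsACWith γ γ' s t →
        -c * sumW W s t ≤ actionW F W γ γ' s t := by
  refine ⟨2 * C₁ ^ 2 + |C₀| + 1, by positivity, ?_⟩
  intro d _ F hF hF₀ hF₁ W hW s t hst γ γ' hγ
  have hbound := neg_mul_sumW_le_actionW (hF.differentiable one_ne_zero) hF₀ hF₁ hW hst.le hγ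
  nlinarith [sumW_nonneg W s t, le_abs_self C₀]
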